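/- Let ξ : ℤ → {0,1} be a bi-infinite word such that for some finite word u and all k ∈ ℤ there exist j ≥ i ≥ k with ξ(i)⋯ξ(j) = u, and such that every factor of ξ has this property, and symmetrically every factor occurs arbitrarily far to the left. Suppose further that ξ has two occurrences of some word u of length n at positions i < j (ξ[i,i+n-1] = ξ[j,j+n-1] = u) and u is right-determining in F(ξ). Then ξ(m) = ξ(m + (j - i)) for all m ∈ ℤ. -/

import Mathlib

/-- `u` occurs in the bi-infinite word `ξ` starting at position `i`. -/
def FactorAt (ξ : ℤ → Bool) (u : List Bool) (i : ℤ) : Prop :=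
  ∀ k : ℕ, k < u.length → u.getD k false = ξ (i + k)

/-- The set of finite factors of the bi-infinite word `ξ`. -/
def Factors (ξ : ℤ → Bool) : Set (List Bool) :=
  {u | ∃ i : ℤ, FactorAt ξ u i}

/-- `ξ` is recurrent: every factor occurs entirely within `(-∞,i]` and within `[i,∞)`
for every `i`. -/
def Recurrent (ξ : ℤ → Bool) : Prop :=
  ∀ u ∈ Factors ξ, ∀ i : ℤ,
    (∃ j : ℤ, j + u.length ≤ i ∧ FactorAt ξ u j) ∧
    (∃ j : ℤ, i ≤ j ∧ FactorAt ξ u j)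

/-- `ξ` is periodic. -/
def BiPeriodic (ξ : ℤ → Bool) : Prop :=
  ∃ p : ℤ, 0 < p ∧ ∀ n : ℤ, ξ n = ξ (n + p)

/-- `u` is right-determining in `F(ξ)`: for every `k` there is exactly one `v` of
length `k` with `u ++ v ∈ F(ξ)`. -/
def RightDet (ξ : ℤ → Bool) (u : List Bool) : Prop :=
  ∀ k : ℕ, ∃! v : List Bool, v.length = k ∧ u ++ v ∈ Factors ξ

/-- `u` is left-determining in `F(ξ)`. -/
def LeftDet (ξ : ℤ → Bool) (u : List Bool) : Prop :=
  ∀ k : ℕ, ∃! v : List Bool, v.length = k ∧ v ++ u ∈ Factors ξ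

/-!
Uniqueness of right extensions makes any two occurrences of `u` carry the same right tail.
By recurrence `u` also occurs at some `p` left of any given position; the tail from `p` agrees
with the tail from `i`, so `u` reoccurs at `p + (j - i)`, and comparing the tails from `p` and
`p + (j - i)` gives the period on all of `[p, ∞)`.
-/

def window (ξ : ℤ → Bool) (a : ℤ) (k : ℕ) : List Bool :=
  (List.range k).map fun t : ℕ => ξ (a + t)

lemma window_length (ξ : ℤ → Bool) (a : ℤ) (k : ℕ) : (window ξ a k).length = k := by
  rw [window, List.length_map, List.length_range]

lemma window_getD (ξ : ℤ → Bool) (a : ℤ) {k t : ℕ} (ht : t < k) :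
    (window ξ a k).getD t false = ξ (a + t) := by
  rw [List.getD_eq_getElem _ _ (by rwa [window_length])]
  simp only [window, List.getElem_map, List.getElem_range]

lemma FactorAt.append_window {ξ : ℤ → Bool} {u : List Bool} {a : ℤ} (h : FactorAt ξ u a)
    (k : ℕ) : FactorAt ξ (u ++ window ξ (a + u.length) k) a := by
  intro t ht
  rcases lt_or_ge t u.length with htu | htu
  · rw [List.getD_append _ _ _ _ htu]
    exact h t htu
  · have htk : t - u.length < k := by
      rw [List.length_append, window_length] at ht
      omega
    rw [List.getD_append_right _ _ _ _ htu, window_getD _ _ htk]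
    congr 1
    omega

lemma Recurrent.exists_factorAt_le {ξ : ℤ → Bool} (hrec : Recurrent ξ) {u : List Bool}
    (hu : u ∈ Factors ξ) (m : ℤ) : ∃ p ≤ m, FactorAt ξ u p := by
  obtain ⟨⟨p, hpm, hp⟩, -⟩ := hrec u hu m
  exact ⟨p, by omega, hp⟩

lemma RightDet.apply_eq_of_factorAt {ξ : ℤ → Bool} {u : List Bool} (hdet : RightDet ξ u)
    {a b : ℤ} (ha : FactorAt ξ u a) (hb : FactorAt ξ u b) {x : ℤ} (hx : a ≤ x) :
    ξ x = ξ (x + (b - a)) := by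
  obtain ⟨s, hs⟩ := Int.eq_ofNat_of_zero_le (sub_nonneg.2 hx)
  -- `u` followed by its unique extension of length `s + 1` occurs at both `a` and `b`.
  obtain ⟨v, -, huniq⟩ := hdet (s + 1)
  have hext : window ξ (a + u.length) (s + 1) = window ξ (b + u.length) (s + 1) :=
    (huniq _ ⟨window_length _ _ _, a, ha.append_window _⟩).trans
      (huniq _ ⟨window_length _ _ _, b, hb.append_window _⟩).symm
  have hwa := ha.append_window (s + 1)
  have hwb := hb.append_window (s + 1)
  rw [hext] at hwa
  have hs_lt : s < (u ++ window ξ (b + u.length) (s + 1)).length := by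
    rw [List.length_append, window_length]
    omega
  calc ξ x = ξ (a + s) := by congr 1; omega
    _ = ξ (b + s) := by rw [← hwa s hs_lt, hwb s hs_lt]
    _ = ξ (x + (b - a)) := by congr 1; omega

theorem right_determining_two_occurrences_give_period_general (ξ : ℤ → Bool)
    (hrec : Recurrent ξ) (u : List Bool)
    (i j : ℤ) (hij : i < j) (hi : FactorAt ξ u i) (hj : FactorAt ξ u j)
    (hdet : RightDet ξ u) :
    ∀ m : ℤ, ξ m = ξ (m + (j - i)) := by
  intro m
  obtain ⟨p, hpm, hp⟩ := hrec.exists_factorAt_le ⟨i, hi⟩ m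
  have hpd : FactorAt ξ u (p + (j - i)) := by
    intro k hk
    rw [hj k hk, hdet.apply_eq_of_factorAt hp hi (x := p + (j - i) + k) (by omega)]
    congr 1
    ring
  exact hdet.apply_eq_of_factorAt hp hpd hpm |>.trans (by congr 1; ring)

theorem right_determining_two_occurrences_give_period (ξ : ℤ → Bool)
    (hrec : Recurrent ξ) (u : List Bool) (n : ℕ) (hn : u.length = n)
    (i j : ℤ) (hij : i < j) (hi : FactorAt ξ u i) (hj : FactorAt ξ u j)
    (hdet : RightDet ξ u) :
    ∀ m : ℤ, ξ m = ξ (m + (j - i)) :=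
  right_determining_two_occurrences_give_period_general ξ hrec u i j hij hi hj hdet
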